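/- arXiv:1004.2239 — 2 statements merged into one kernel-verified Lean document; each statement's English description precedes it below -/
import Mathlib

section
/- Let P : Prop → Prop satisfy necessitation (∀ A, A → P A), distribution (∀ A B, P A → P (A → B) → P B), and internal necessitation (∀ A, P A → P (P A)). Suppose C : Prop satisfies the Curry fixed point C ↔ (P C → False). Then P False. -/
theorem stmt_10 (P : Prop → Prop)
    (nec : ∀ A : Prop, A → P A)
    (dist : ∀ A B : Prop, P A → P (A → B) → P B)
    (inec : ∀ A : Prop, P A → P (P A))
    (C : Prop) (hC : C ↔ (P C → False)) : P False := by
  have f : P C → P False := fun hpc =>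
    dist _ _ (inec _ hpc) (dist _ _ hpc (nec _ hC.mp))
  have hpc : P C := by
    by_contra h
    exact h (nec _ (hC.mpr fun hp => h hp))
  exact f hpc
end

section
/- Let P : Prop → Prop satisfy necessitation (∀ A, A → P A) and distribution (∀ A B, P A → P (A → B) → P B). Suppose L : Prop satisfies L ↔ P (¬L). Then (¬ P False) → False, i.e., under these axioms one can refute the consistency assertion; equivalently, ¬¬ P False holds. -/
theorem stmt_11 (P : Prop → Prop)
    (nec : ∀ A : Prop, A → P A)
    (dist : ∀ A B : Prop, P A → P (A → B) → P B)
    (L : Prop) (hL : L ↔ P (¬L)) : ¬¬ P False := by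
  have hl : L := by
    by_contra hnl
    exact hnl (hL.mpr (nec _ hnl))
  intro h
  exact h (dist L False (nec L hl) (hL.mp hl))
end
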